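/- arXiv:1709.02055 — 2 statements merged into one kernel-verified Lean document; each statement's English description precedes it below -/
import Mathlib

section
/- Fix constants a > c > 0, κ > 0 (representing |P₁B||K|), Λ > 0 (representing λ_max(P₁)), and λ ∈ [0,1]. Define δ(ν) = (1/(a-c))·ln((c + (ν/κ)a)/(c + (ν/κ)c)) and μ(ν) = (2-ν²)/(4Λ) for ν > 0, and J(ν) = λδ(ν) + (1-λ)μ(ν). Then J is strictly concave on (0, √2), and any critical point ν* ∈ (0,√2) of J satisfies the cubic equation a(1-λ)ν³ + (a+c)κ(1-λ)ν² + cκ²(1-λ)ν - 2Λκλ = 0. -/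
open Set

/-- the aggregate objective J(ν) = λδ(ν) + (1-λ)μ(ν) is strictly
concave on (0,√2), and its critical points satisfy the stated cubic equation. -/
theorem aggregate_objective_concave_and_cubic
    (a c κ Λ lam : ℝ)
    (hc : 0 < c) (hac : c < a) (hκ : 0 < κ) (hΛ : 0 < Λ)
    (hlam : lam ∈ Icc (0:ℝ) 1)
    (δ μ J : ℝ → ℝ)
    (hδ : ∀ ν, δ ν = (1 / (a - c)) * Real.log ((c + (ν / κ) * a) / (c + (ν / κ) * c)))
    (hμ : ∀ ν, μ ν = (2 - ν^2) / (4 * Λ))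
    (hJ : ∀ ν, J ν = lam * δ ν + (1 - lam) * μ ν) :
    StrictConcaveOn ℝ (Ioo 0 (Real.sqrt 2)) J ∧
    ∀ ν ∈ Ioo 0 (Real.sqrt 2), deriv J ν = 0 →
      a * (1 - lam) * ν^3 + (a + c) * κ * (1 - lam) * ν^2 +
        c * κ^2 * (1 - lam) * ν - 2 * Λ * κ * lam = 0 := by
  have hacne : a - c ≠ 0 := by linarith
  have hκne : κ ≠ 0 := ne_of_gt hκ
  have hΛne : (4 : ℝ) * Λ ≠ 0 := by positivity
  -- positivity of the log arguments for ν > 0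
  have ha : 0 < a := hc.trans hac
  have hacpos : 0 < a - c := by linarith
  have hA : ∀ ν : ℝ, 0 < ν → 0 < c + ν / κ * a := by
    intro ν hν
    have : 0 < ν / κ * a := by positivity
    linarith
  have hB : ∀ ν : ℝ, 0 < ν → 0 < c + ν / κ * c := by
    intro ν hν
    have : 0 < ν / κ * c := by positivity
    linarith
  -- the first derivative of J on (0, ∞)
  set G : ℝ → ℝ := fun ν =>
    lam * ((a - c)⁻¹ * ((1 / κ * a) / (c + ν / κ * a) - (1 / κ * c) / (c + ν / κ * c))) +
      (1 - lam) * (-(2 * ν) / (4 * Λ)) with hG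
  have hJd : ∀ ν : ℝ, 0 < ν → HasDerivAt J (G ν) ν := by
    intro ν hν
    have hAν := hA ν hν
    have hBν := hB ν hν
    -- rewrite J as a sum of logs near ν
    have hfa : HasDerivAt (fun x : ℝ => c + x / κ * a) (1 / κ * a) ν := by
      have := ((hasDerivAt_id ν).div_const κ).mul_const a
      simpa using this.const_add c
    have hfb : HasDerivAt (fun x : ℝ => c + x / κ * c) (1 / κ * c) ν := by
      have := ((hasDerivAt_id ν).div_const κ).mul_const c
      simpa using this.const_add c
    have hlog : HasDerivAt
        (fun x : ℝ => lam * ((1 / (a - c)) *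
          (Real.log (c + x / κ * a) - Real.log (c + x / κ * c))) +
          (1 - lam) * ((2 - x ^ 2) / (4 * Λ))) (G ν) ν := by
      have h1 := (hfa.log hAν.ne').sub (hfb.log hBν.ne')
      have h2 : HasDerivAt (fun x : ℝ => (2 - x ^ 2) / (4 * Λ)) (-(2 * ν) / (4 * Λ)) ν := by
        have := (((hasDerivAt_pow 2 ν).const_sub 2).div_const (4 * Λ))
        simpa using this
      have := ((h1.const_mul (1 / (a - c))).const_mul lam).add (h2.const_mul (1 - lam))
      refine this.congr_deriv ?_
      rw [hG]
      field_simp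
    apply hlog.congr_of_eventuallyEq
    have hopen : Ioi (0 : ℝ) ∈ nhds ν := Ioi_mem_nhds hν
    filter_upwards [hopen] with x hx
    rw [hJ, hδ, hμ, Real.log_div (hA x hx).ne' (hB x hx).ne']
  -- the second derivative of J
  set G2 : ℝ → ℝ := fun ν =>
    lam * ((a - c)⁻¹ * ((1 / κ * a) * (-(1 / κ * a) / (c + ν / κ * a) ^ 2) -
      (1 / κ * c) * (-(1 / κ * c) / (c + ν / κ * c) ^ 2))) +
      (1 - lam) * (-(2) / (4 * Λ)) with hG2
  have hGd : ∀ ν : ℝ, 0 < ν → HasDerivAt G (G2 ν) ν := by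
    intro ν hν
    have hAν := hA ν hν
    have hBν := hB ν hν
    have hfa : HasDerivAt (fun x : ℝ => c + x / κ * a) (1 / κ * a) ν := by
      have := ((hasDerivAt_id ν).div_const κ).mul_const a
      simpa using this.const_add c
    have hfb : HasDerivAt (fun x : ℝ => c + x / κ * c) (1 / κ * c) ν := by
      have := ((hasDerivAt_id ν).div_const κ).mul_const c
      simpa using this.const_add c
    have h1 : HasDerivAt (fun x : ℝ => (1 / κ * a) / (c + x / κ * a))
        ((1 / κ * a) * (-(1 / κ * a) / (c + ν / κ * a) ^ 2)) ν := by
      have := (hfa.inv hAν.ne').const_mul (1 / κ * a)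
      simpa [div_eq_mul_inv, mul_comm, mul_left_comm] using this
    have h2 : HasDerivAt (fun x : ℝ => (1 / κ * c) / (c + x / κ * c))
        ((1 / κ * c) * (-(1 / κ * c) / (c + ν / κ * c) ^ 2)) ν := by
      have := (hfb.inv hBν.ne').const_mul (1 / κ * c)
      simpa [div_eq_mul_inv, mul_comm, mul_left_comm] using this
    have h3 : HasDerivAt (fun x : ℝ => -(2 * x) / (4 * Λ)) (-(2) / (4 * Λ)) ν := by
      have := (((hasDerivAt_id ν).const_mul 2).neg).div_const (4 * Λ)
      simpa using this
    have := (((h1.sub h2).const_mul ((a - c)⁻¹)).const_mul lam).add (h3.const_mul (1 - lam))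
    exact this
  -- G2 is negative on (0, √2)
  have hG2neg : ∀ ν : ℝ, 0 < ν → G2 ν < 0 := by
    intro ν hν
    have hAν := hA ν hν
    have hBν := hB ν hν
    have hcA : c * (c + ν / κ * a) < a * (c + ν / κ * c) := by
      have h1 : c * c < a * c := by nlinarith
      have h2 : c * (ν / κ * a) = a * (ν / κ * c) := by ring
      nlinarith [h1, h2]
    have key2 : (1 / κ * c) ^ 2 / (c + ν / κ * c) ^ 2 <
        (1 / κ * a) ^ 2 / (c + ν / κ * a) ^ 2 := by
      rw [div_lt_div_iff₀ (by positivity) (by positivity)]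
      have h1 : 0 < (a * (c + ν / κ * c) - c * (c + ν / κ * a)) *
          (a * (c + ν / κ * c) + c * (c + ν / κ * a)) :=
        mul_pos (by linarith) (by nlinarith)
      nlinarith [mul_pos (show (0:ℝ) < (1 / κ) ^ 2 by positivity) h1]
    have key : (1 / κ * a) * (-(1 / κ * a) / (c + ν / κ * a) ^ 2) -
        (1 / κ * c) * (-(1 / κ * c) / (c + ν / κ * c) ^ 2) < 0 := by
      have hre : (1 / κ * a) * (-(1 / κ * a) / (c + ν / κ * a) ^ 2) -
          (1 / κ * c) * (-(1 / κ * c) / (c + ν / κ * c) ^ 2) =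
          (1 / κ * c) ^ 2 / (c + ν / κ * c) ^ 2 -
          (1 / κ * a) ^ 2 / (c + ν / κ * a) ^ 2 := by
        field_simp
        ring
      rw [hre]
      linarith
    have hneg : -(2:ℝ) / (4 * Λ) < 0 :=
      div_neg_of_neg_of_pos (by norm_num) (by positivity)
    have hterm1 : lam * ((a - c)⁻¹ * ((1 / κ * a) * (-(1 / κ * a) / (c + ν / κ * a) ^ 2) -
        (1 / κ * c) * (-(1 / κ * c) / (c + ν / κ * c) ^ 2))) ≤ 0 :=
      mul_nonpos_of_nonneg_of_nonpos hlam.1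
        (mul_nonpos_of_nonneg_of_nonpos (inv_nonneg.mpr hacpos.le) key.le)
    have hterm2 : (1 - lam) * (-(2:ℝ) / (4 * Λ)) ≤ 0 :=
      mul_nonpos_of_nonneg_of_nonpos (by linarith [hlam.2]) hneg.le
    rw [hG2]
    dsimp only
    rcases lt_or_eq_of_le hlam.2 with h1 | h1
    · have hstrict : (1 - lam) * (-(2:ℝ) / (4 * Λ)) < 0 :=
        mul_neg_of_pos_of_neg (by linarith) hneg
      linarith
    · have hstrict : lam * ((a - c)⁻¹ * ((1 / κ * a) * (-(1 / κ * a) / (c + ν / κ * a) ^ 2) -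
          (1 / κ * c) * (-(1 / κ * c) / (c + ν / κ * c) ^ 2))) < 0 := by
        rw [h1, one_mul]
        exact mul_neg_of_pos_of_neg (inv_pos.mpr hacpos) key
      linarith
  constructor
  · apply strictConcaveOn_of_deriv2_neg (convex_Ioo _ _)
    · intro ν hν
      exact (hJd ν hν.1).continuousAt.continuousWithinAt
    · intro ν hν
      rw [interior_Ioo] at hν
      have hderiv2 : deriv (deriv J) ν = G2 ν := by
        have heq : deriv J =ᶠ[nhds ν] G := by
          filter_upwards [Ioi_mem_nhds hν.1] with x hx
          exact (hJd x hx).deriv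
        rw [heq.deriv_eq]
        exact (hGd ν hν.1).deriv
      simpa [Function.iterate_succ, hderiv2] using hG2neg ν hν.1
  · intro ν hν h0
    have hg0 : G ν = 0 := by
      rw [← (hJd ν hν.1).deriv]
      exact h0
    have hAν := hA ν hν.1
    have hBν := hB ν hν.1
    have hA' : c * κ + ν * a ≠ 0 := ne_of_gt (add_pos (mul_pos hc hκ) (mul_pos hν.1 ha))
    have hB' : c * κ + ν * c ≠ 0 := ne_of_gt (add_pos (mul_pos hc hκ) (mul_pos hν.1 hc))
    rw [hG] at hg0
    dsimp only at hg0
    have hκν : κ + ν ≠ 0 := by linarith [hν.1]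
    have hA2 : c * κ + a * ν ≠ 0 := by rw [mul_comm a ν]; exact hA'
    field_simp at hg0
    have key : (2 * c * (a - c)) * (a * (1 - lam) * ν ^ 3 + (a + c) * κ * (1 - lam) * ν ^ 2 +
        c * κ ^ 2 * (1 - lam) * ν - 2 * Λ * κ * lam) = 0 := by
      linear_combination (-c) * hg0
    have h2c : (2 * c * (a - c)) ≠ 0 := by positivity
    exact (mul_eq_zero.mp key).resolve_left h2c
end

section
/- For the linear scalar-input system ẋ = Ax + Bu(φ(t)) with (A,B) as matrices and φ the delay function with inverse σ, the predictor p(t) = e^{A(σ(t)-t)}x(t) + ∫_{φ(t)}^t σ'(s) e^{A(σ(t)-σ(s))} B u(s) ds satisfies p(t) = x(σ(t)) for all t ≥ 0, provided x solves the delayed dynamics on [0, σ(t)]. -/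
open Set Matrix

/-- the linear predictor formula recovers the future state:
p(t) = e^{A(σ(t)-t)}x(t) + ∫_{φ(t)}^t σ'(s) e^{A(σ(t)-σ(s))} B u(s) ds = x(σ(t)). -/
theorem linear_predictor_equals_future_state
    {n : ℕ} (A : Matrix (Fin n) (Fin n) ℝ) (B : Fin n → ℝ)
    (u φ σ σ' : ℝ → ℝ) (x : ℝ → Fin n → ℝ) (t : ℝ) (ht : 0 ≤ t)
    (hφ_lt : ∀ s, φ s < s)
    (hφ_mono : StrictMono φ) (hφ_cont : Continuous φ)
    (hσφ : ∀ s, σ (φ s) = s) (hφσ : ∀ s, φ (σ s) = s)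
    (hσdiff : ∀ s, HasDerivAt σ (σ' s) s) (hσ'_cont : Continuous σ')
    (hu_cont : ContinuousOn u (Icc (φ 0) t))
    (hx : ∀ s ∈ Icc (0:ℝ) (σ t),
      HasDerivAt x (A.mulVec (x s) + u (φ s) • B) s) :
    (NormedSpace.exp ((σ t - t) • A)).mulVec (x t) +
        (∫ s in φ t..t, σ' s • (NormedSpace.exp ((σ t - σ s) • A)).mulVec (u s • B)) =
      x (σ t) := by
  letI : SeminormedRing (Matrix (Fin n) (Fin n) ℝ) := Matrix.linftyOpSemiNormedRing
  letI : NormedRing (Matrix (Fin n) (Fin n) ℝ) := Matrix.linftyOpNormedRing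
  letI : NormedAlgebra ℝ (Matrix (Fin n) (Fin n) ℝ) := Matrix.linftyOpNormedAlgebra
  letI : CompleteSpace (Matrix (Fin n) (Fin n) ℝ) := FiniteDimensional.complete ℝ _
  have hσ_mono : StrictMono σ := by
    intro a b hab
    by_contra h
    push_neg at h
    have h2 : φ (σ b) ≤ φ (σ a) := hφ_mono.le_iff_le.mpr h
    rw [hφσ, hφσ] at h2
    exact absurd hab (not_lt.mpr h2)
  have hσ_cont : Continuous σ :=
    continuous_iff_continuousAt.mpr fun s => (hσdiff s).continuousAt
  have hφt_lt : φ t < t := hφ_lt t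
  have ht_lt : t < σ t := by have := hφ_lt (σ t); rwa [hφσ] at this
  -- the continuous linear map version of mulVec
  let L : Matrix (Fin n) (Fin n) ℝ →L[ℝ] (Fin n → ℝ) →L[ℝ] (Fin n → ℝ) :=
    LinearMap.toContinuousLinearMap
      ((LinearMap.toContinuousLinearMap :
          ((Fin n → ℝ) →ₗ[ℝ] (Fin n → ℝ)) ≃ₗ[ℝ] ((Fin n → ℝ) →L[ℝ] (Fin n → ℝ))).toLinearMap
        ∘ₗ (Matrix.toLin' :
          Matrix (Fin n) (Fin n) ℝ ≃ₗ[ℝ] ((Fin n → ℝ) →ₗ[ℝ] (Fin n → ℝ))).toLinearMap)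
  have hL : ∀ (M : Matrix (Fin n) (Fin n) ℝ) (v : Fin n → ℝ), L M v = M.mulVec v := by
    intro M v
    simp [L, Matrix.toLin'_apply]
  let M : ℝ → Matrix (Fin n) (Fin n) ℝ := fun s => NormedSpace.exp ((σ t - σ s) • A)
  let g : ℝ → Fin n → ℝ := fun s => L (M s) (x (σ s))
  have key : ∀ s ∈ uIcc (φ t) t,
      HasDerivAt g (σ' s • (NormedSpace.exp ((σ t - σ s) • A)).mulVec (u s • B)) s := by
    intro s hs
    rw [uIcc_of_le hφt_lt.le] at hs
    have hσs : σ s ∈ Icc (0:ℝ) (σ t) := by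
      constructor
      · have : t ≤ σ s := by
          have := hσ_mono.monotone hs.1; rwa [hσφ] at this
        linarith
      · exact hσ_mono.monotone hs.2
    have hM : HasDerivAt M ((-σ' s) • (M s * A)) s := by
      have h1 := hasDerivAt_exp_smul_const (𝕂 := ℝ) A (σ t - σ s)
      have h2 : HasDerivAt (fun r => σ t - σ r) (-σ' s) s := (hσdiff s).const_sub (σ t)
      convert h1.scomp s h2 using 1 <;> rfl
    have hxσ : HasDerivAt (fun r => x (σ r))
        (σ' s • (A.mulVec (x (σ s)) + u s • B)) s := by
      have := (hx (σ s) hσs).scomp s (hσdiff s)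
      rwa [hφσ] at this
    have hc : HasDerivAt (fun r => L (M r)) (L ((-σ' s) • (M s * A))) s :=
      L.hasFDerivAt.comp_hasDerivAt s hM
    have := hc.clm_apply hxσ
    refine this.congr_deriv ?_
    have e1 : L ((-σ' s) • (M s * A)) (x (σ s))
        = (-σ' s) • (M s).mulVec (A.mulVec (x (σ s))) := by
      rw [_root_.map_smul, ContinuousLinearMap.smul_apply, hL, Matrix.mulVec_mulVec]
    have e2 : L (M s) (σ' s • (A.mulVec (x (σ s)) + u s • B))
        = σ' s • (M s).mulVec (A.mulVec (x (σ s))) + σ' s • (M s).mulVec (u s • B) := by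
      rw [hL, Matrix.mulVec_smul, Matrix.mulVec_add, smul_add]
    rw [e1, e2, neg_smul]
    abel
  have hsub : Icc (φ t) t ⊆ Icc (φ 0) t :=
    Icc_subset_Icc (hφ_mono.monotone ht) le_rfl
  have hcont : ContinuousOn
      (fun s => σ' s • (NormedSpace.exp ((σ t - σ s) • A)).mulVec (u s • B))
      (uIcc (φ t) t) := by
    rw [uIcc_of_le hφt_lt.le]
    have hMc : Continuous M :=
      (letI : NormedAlgebra ℚ (Matrix (Fin n) (Fin n) ℝ) := NormedAlgebra.restrictScalars ℚ ℝ _; NormedSpace.exp_continuous).comp ((continuous_const.sub hσ_cont).smul continuous_const)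
    have h1 : ContinuousOn (fun s => L (M s) (u s • B)) (Icc (φ t) t) :=
      ContinuousOn.clm_apply ((L.continuous.comp hMc).continuousOn)
        (((hu_cont.mono hsub).smul continuousOn_const))
    have : (fun s => (NormedSpace.exp ((σ t - σ s) • A)).mulVec (u s • B))
        = fun s => L (M s) (u s • B) := by
      funext s; rw [hL]
    rw [show (fun s => σ' s • (NormedSpace.exp ((σ t - σ s) • A)).mulVec (u s • B))
        = fun s => σ' s • L (M s) (u s • B) by funext s; rw [hL]]
    exact hσ'_cont.continuousOn.smul h1
  have hint := intervalIntegral.integral_eq_sub_of_hasDerivAt key hcont.intervalIntegrable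
  rw [hint]
  have hgt : g t = x (σ t) := by
    simp [g, M, sub_self, hL, NormedSpace.exp_zero, Matrix.one_mulVec]
  have hgφt : g (φ t) = (NormedSpace.exp ((σ t - t) • A)).mulVec (x t) := by
    simp [g, M, hσφ t, hL]
  rw [hgt, hgφt]
  abel
end
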